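/- Let V, U : ℕ → (0,∞) be strictly increasing functions with lim_{N→∞} V(N) = ∞, lim_{N→∞} U(N) = ∞, and lim_{N→∞} Δ log V(N) = 0. Suppose the limit c = lim_{N→∞} (V(N−1)/ΔU(N))·(ΔU(N)/ΔV(N) − ΔU(N−1)/ΔV(N−1)) exists in ℝ ∪ {−∞, +∞}. Then c = −1 if and only if lim_{N→∞} Δ log U(N)/Δ log V(N) = 0. -/

import Mathlib

open Filter Finset MeasureTheory

/-- Discrete derivative: `Δg(n) = g(n) - g(n-1)` for `n ≥ 2`, and `Δg(1) = g(1)`. -/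
noncomputable def dd (g : ℕ → ℝ) (n : ℕ) : ℝ := if n = 1 then g 1 else g n - g (n - 1)

/-- Iterated discrete derivative `Δ^k`. -/
noncomputable def ddIter (f : ℕ → ℝ) : ℕ → ℕ → ℝ
  | 0 => f
  | k + 1 => dd (ddIter f k)

/-- `N`-th `W`-weighted average `𝔼^W_{n ≤ N} x_n`. -/
noncomputable def wavg {Y : Type*} [AddCommGroup Y] [Module ℝ Y]
    (W : ℕ → ℝ) (x : ℕ → Y) (N : ℕ) : Y :=
  (W N)⁻¹ • ∑ n ∈ Finset.Icc 1 N, dd W n • x n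

/-- `W`-weighted average over the interval `[M, N]`. -/
noncomputable def wavgI {Y : Type*} [AddCommGroup Y] [Module ℝ Y]
    (W : ℕ → ℝ) (x : ℕ → Y) (M N : ℕ) : Y :=
  (W N - W M)⁻¹ • ∑ n ∈ Finset.Icc M N, dd W n • x n

/-- Cesàro average over the interval `[M, N]`. -/
noncomputable def cesaroI {Y : Type*} [AddCommGroup Y] [Module ℝ Y]
    (x : ℕ → Y) (M N : ℕ) : Y :=
  ((N : ℝ) - (M : ℝ))⁻¹ • ∑ n ∈ Finset.Icc M N, x n

/-- Iterated `W`-weighted averages: `iterAvg W x k N = 𝔼(k)^W_{n ≤ N} x_n`,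
with the convention `iterAvg W x 0 = x`. -/
noncomputable def iterAvg {Y : Type*} [AddCommGroup Y] [Module ℝ Y]
    (W : ℕ → ℝ) (x : ℕ → Y) : ℕ → ℕ → Y
  | 0, N => x N
  | k + 1, N => (W N)⁻¹ • ∑ n ∈ Finset.Icc 1 N, dd W n • iterAvg W x k n

/-- The uniform `W`-weighted average of `x` equals `L`: `𝔼^W_unif x_n = L`. -/
def unifAvg {Y : Type*} [NormedAddCommGroup Y] [NormedSpace ℝ Y]
    (W : ℕ → ℝ) (x : ℕ → Y) (L : Y) : Prop :=
  ∀ ε > (0 : ℝ), ∃ K > (0 : ℝ), ∀ M N : ℕ, 1 ≤ M → M ≤ N → K ≤ W N - W M →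
    ‖wavgI W x M N - L‖ < ε

/-- `𝔼(∞)^W x_n = L`: `lim_{k → ∞} limsup_{N → ∞} ‖𝔼(k)^W_{n ≤ N}(x_n - L)‖ = 0`. -/
def iterInfty {Y : Type*} [NormedAddCommGroup Y] [NormedSpace ℝ Y]
    (W : ℕ → ℝ) (x : ℕ → Y) (L : Y) : Prop :=
  Tendsto (fun k => Filter.limsup (fun N => ‖iterAvg W (fun n => x n - L) (k + 1) N‖) atTop)
    atTop (nhds 0)

/-- Membership in the class `𝓕₁`. -/
def inF1 (f : ℕ → ℝ) : Prop :=
  Tendsto f atTop atTop ∧ Tendsto (fun n => dd f n) atTop (nhds 0) ∧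
    ∃ n₀ : ℕ, ∀ m n : ℕ, n₀ ≤ m → m ≤ n → dd f n ≤ dd f m

/-- `memF ℓ f` means `f ∈ 𝓕_{ℓ+1}`. -/
def memF : ℕ → (ℕ → ℝ) → Prop
  | 0, f => inF1 f
  | ℓ + 1, f => memF ℓ (dd f)

/-- Integer powers `T^m` of an invertible map `T` with inverse `e`. -/
def zpowIter {X : Type*} (T e : X → X) (m : ℤ) : X → X :=
  if 0 ≤ m then T^[m.toNat] else e^[(-m).toNat]

/-- `p(Δ)f(n)` for an integer polynomial `p`. -/
noncomputable def polyDD (p : Polynomial ℤ) (f : ℕ → ℝ) (n : ℕ) : ℝ :=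
  ∑ j ∈ Finset.range (p.natDegree + 1), (p.coeff j : ℝ) * ddIter f j n

/-- `E ⊆ ℕ = {1, 2, ...}` has positive upper Banach density. -/
def posUBD (E : Set ℕ) : Prop :=
  ∃ δ : ℝ, 0 < δ ∧ ∃ M N : ℕ → ℕ, (∀ j, 1 ≤ M j ∧ M j ≤ N j) ∧
    Tendsto (fun j => N j - M j) atTop atTop ∧
    ∀ j, δ * ((N j : ℝ) - (M j : ℝ)) ≤ (Nat.card ↥(E ∩ Set.Icc (M j) (N j)) : ℝ)

open Topology

/-! With `A = (ΔU / ΔV) · V − U` one has `ΔA = X · ΔU` for the quotient `X` whose limit is `c`, so by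
Stolz–Cesàro (and a monotonicity argument when `c = ±∞`) `c = −1` iff `A / U → −1`. Now
`A / U + 1 = (1 − U(N−1)/U(N)) / (1 − V(N−1)/V(N))`, and since `1 − 1/t ≤ log t ≤ t − 1`, this ratio
and `Δ log U / Δ log V` bound each other up to the factors `U(N)/U(N−1)` and `V(N)/V(N−1)`, which
tend to `1` as soon as either ratio tends to `0`, because `Δ log V → 0`. -/

lemma dd_of_two_le (f : ℕ → ℝ) {n : ℕ} (hn : 2 ≤ n) : dd f n = f n - f (n - 1) := by
  simp [dd, show n ≠ 1 by omega]

lemma dd_neg (f : ℕ → ℝ) (n : ℕ) : dd (fun j => -f j) n = -dd f n := by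
  unfold dd; split_ifs <;> ring

lemma dd_pos {f : ℕ → ℝ} (hpos : ∀ n, 1 ≤ n → 0 < f n)
    (hmono : ∀ m n, 1 ≤ m → m < n → f m < f n) {n : ℕ} (hn : 1 ≤ n) : 0 < dd f n := by
  rcases hn.eq_or_lt with rfl | hn
  · simpa [dd] using hpos 1 le_rfl
  · rw [dd_of_two_le f hn, sub_pos]
    exact hmono (n - 1) n (by omega) (by omega)

lemma dd_nonneg {f : ℕ → ℝ} (hpos : ∀ n, 1 ≤ n → 0 < f n)
    (hmono : ∀ m n, 1 ≤ m → m < n → f m < f n) (n : ℕ) : 0 ≤ dd f n := by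
  rcases Nat.eq_zero_or_pos n with rfl | hn
  · simp [dd]
  · exact (dd_pos hpos hmono hn).le

lemma dd_log {f : ℕ → ℝ} (hpos : ∀ n, 1 ≤ n → 0 < f n) {n : ℕ} (hn : 2 ≤ n) :
    dd (fun j => Real.log (f j)) n = Real.log (f n / f (n - 1)) := by
  rw [dd_of_two_le _ hn, Real.log_div (hpos n (by omega)).ne' (hpos (n - 1) (by omega)).ne']

lemma sum_range_dd (f : ℕ → ℝ) {n : ℕ} (hn : 1 ≤ n) : ∑ i ∈ range (n + 1), dd f i = f n := by
  induction n, hn using Nat.le_induction with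
  | base => simp [Finset.sum_range_succ, dd]
  | succ n hn ih => rw [Finset.sum_range_succ, ih, dd_of_two_le f (by omega)]; simp

theorem tendsto_div_of_dd_eq_mul {A U X : ℕ → ℝ} {c : ℝ} (hdU : ∀ n, 0 ≤ dd U n)
    (hU : Tendsto U atTop atTop) (hAU : ∀ᶠ n in atTop, dd A n = X n * dd U n)
    (hX : Tendsto X atTop (𝓝 c)) : Tendsto (fun n => A n / U n) atTop (𝓝 c) := by
  have hsumU : ∀ᶠ n in atTop, ∑ i ∈ range (n + 1), dd U i = U n :=
    eventually_ge_atTop 1 |>.mono fun n hn => sum_range_dd U hn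
  have hsumA : ∀ᶠ n in atTop, ∑ i ∈ range (n + 1), (dd A i - c * dd U i) = A n - c * U n :=
    eventually_ge_atTop 1 |>.mono fun n hn => by
      rw [Finset.sum_sub_distrib, ← Finset.mul_sum, sum_range_dd A hn, sum_range_dd U hn]
  have hlocal : (fun n => dd A n - c * dd U n) =o[atTop] fun n => dd U n := by
    refine Asymptotics.isLittleO_iff.2 fun ε hε => ?_
    filter_upwards [hAU, Metric.tendsto_nhds.1 hX ε hε] with n hn hXn
    rw [hn, ← sub_mul, norm_mul, Real.norm_of_nonneg (hdU n)]
    exact mul_le_mul_of_nonneg_right hXn.le (hdU n)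
  have hsum_top : Tendsto (fun n => ∑ i ∈ range n, dd U i) atTop atTop :=
    (tendsto_add_atTop_iff_nat 1).1 (hU.congr' (hsumU.mono fun _ h => h.symm))
  have hglobal : (fun n => A n - c * U n) =o[atTop] U :=
    ((hlocal.sum_range hdU hsum_top).comp_tendsto (tendsto_add_atTop_nat 1)).congr' hsumA hsumU
  have hdiv := hglobal.tendsto_div_nhds_zero.add_const c
  rw [zero_add] at hdiv
  refine hdiv.congr' ((hU.eventually_gt_atTop 0).mono fun n hn => ?_)
  rw [sub_div, mul_div_cancel_right₀ _ hn.ne', sub_add_cancel]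

theorem le_of_tendsto_div_of_mul_dd_le {A U : ℕ → ℝ} {a l : ℝ} (hU : Tendsto U atTop atTop)
    (hAU : ∀ᶠ n in atTop, a * dd U n ≤ dd A n)
    (hlim : Tendsto (fun n => A n / U n) atTop (𝓝 l)) : a ≤ l := by
  obtain ⟨N, hN⟩ := eventually_atTop.1 (hAU.and (eventually_ge_atTop 2))
  set B : ℕ → ℝ := fun n => A n - a * U n
  have hB_mono : Monotone fun k => B (N + k) := by
    refine monotone_nat_of_le_succ fun k => ?_
    obtain ⟨hk, h2⟩ := hN (N + k + 1) (by omega)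
    rw [dd_of_two_le A h2, dd_of_two_le U h2] at hk
    simp only [B, Nat.add_sub_cancel, ← add_assoc] at hk ⊢
    linarith
  have hB_lim : Tendsto (fun n => B n / U n) atTop (𝓝 (l - a)) := by
    refine (hlim.sub_const a).congr' ((hU.eventually_gt_atTop 0).mono fun n hn => ?_)
    simp only [B]
    field_simp
  have hB_low : ∀ᶠ n in atTop, B N / U n ≤ B n / U n := by
    filter_upwards [hU.eventually_gt_atTop 0, eventually_ge_atTop N] with n hn hNn
    obtain ⟨k, rfl⟩ := Nat.exists_eq_add_of_le hNn
    exact div_le_div_of_nonneg_right (hB_mono (Nat.zero_le k)) hn.le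
  have := le_of_tendsto_of_tendsto (tendsto_const_nhds.div_atTop hU) hB_lim hB_low
  linarith

theorem eq_coe_iff_tendsto_div_of_dd_eq_mul {A U X : ℕ → ℝ} {c : EReal} {l : ℝ}
    (hdU : ∀ n, 0 ≤ dd U n) (hU : Tendsto U atTop atTop)
    (hAU : ∀ᶠ n in atTop, dd A n = X n * dd U n)
    (hX : Tendsto (fun n => (X n : EReal)) atTop (𝓝 c)) :
    c = l ↔ Tendsto (fun n => A n / U n) atTop (𝓝 l) := by
  refine ⟨fun hc => tendsto_div_of_dd_eq_mul hdU hU hAU (EReal.tendsto_coe.1 (hc ▸ hX)),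
    fun hlim => ?_⟩
  induction c using EReal.rec with
  | coe c => exact congrArg _ (tendsto_nhds_unique (tendsto_div_of_dd_eq_mul hdU hU hAU
      (EReal.tendsto_coe.1 hX)) hlim)
  | top =>
    refine absurd (le_of_tendsto_div_of_mul_dd_le (a := l + 1) hU ?_ hlim) (by linarith)
    filter_upwards [hAU, EReal.tendsto_nhds_top_iff_real.1 hX (l + 1)] with n hn hXn
    rw [hn]
    exact mul_le_mul_of_nonneg_right (EReal.coe_lt_coe_iff.1 hXn).le (hdU n)
  | bot =>
    refine absurd (le_of_tendsto_div_of_mul_dd_le (A := fun n => -A n) (a := -l + 1) hU ?_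
      (by simpa only [neg_div] using hlim.neg)) (by linarith)
    filter_upwards [hAU, EReal.tendsto_nhds_bot_iff_real.1 hX (l - 1)] with n hn hXn
    rw [dd_neg, hn, ← neg_mul]
    exact mul_le_mul_of_nonneg_right (by linarith [EReal.coe_lt_coe_iff.1 hXn]) (hdU n)

-- Both follow from `1 - t⁻¹ ≤ log t ≤ t - 1 = t * (1 - t⁻¹)`.
lemma log_div_log_le_mul_one_sub_inv_div {x y : ℝ} (hx : 1 < x) (hy : 1 < y) :
    Real.log x / Real.log y ≤ x * ((1 - x⁻¹) / (1 - y⁻¹)) := by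
  have hxF : x * (1 - x⁻¹) = x - 1 := by field_simp
  rw [← mul_div_assoc]
  exact div_le_div₀ (by linarith) (hxF ▸ Real.log_le_sub_one_of_pos (by linarith))
    (sub_pos.2 (inv_lt_one_of_one_lt₀ hy)) (Real.one_sub_inv_le_log_of_pos (by linarith))

lemma one_sub_inv_div_le_mul_log_div {x y : ℝ} (hx : 1 < x) (hy : 1 < y) :
    (1 - x⁻¹) / (1 - y⁻¹) ≤ y * (Real.log x / Real.log y) := by
  have hyF : y * (1 - y⁻¹) = y - 1 := by field_simp
  have uy := Real.log_le_sub_one_of_pos (zero_lt_one.trans hy)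
  rw [← mul_div_assoc, mul_comm, ← div_div_eq_mul_div]
  exact div_le_div₀ (Real.log_nonneg hx.le) (Real.one_sub_inv_le_log_of_pos (by linarith))
    (div_pos (Real.log_pos hy) (by linarith)) ((div_le_iff₀ (by linarith)).2 (by linarith))

theorem tendsto_one_sub_inv_div_iff_tendsto_log_div {ι : Type*} {F : Filter ι} {x y : ι → ℝ}
    (hx : ∀ᶠ i in F, 1 < x i) (hy : ∀ᶠ i in F, 1 < y i) (hy1 : Tendsto y F (𝓝 1)) :
    Tendsto (fun i => (1 - (x i)⁻¹) / (1 - (y i)⁻¹)) F (𝓝 0) ↔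
      Tendsto (fun i => Real.log (x i) / Real.log (y i)) F (𝓝 0) := by
  have hF_nonneg : ∀ᶠ i in F, 0 ≤ (1 - (x i)⁻¹) / (1 - (y i)⁻¹) := by
    filter_upwards [hx, hy] with i hxi hyi
    exact div_nonneg (sub_nonneg.2 (inv_le_one_of_one_le₀ hxi.le))
      (sub_nonneg.2 (inv_le_one_of_one_le₀ hyi.le))
  have hlog_nonneg : ∀ᶠ i in F, 0 ≤ Real.log (x i) / Real.log (y i) := by
    filter_upwards [hx, hy] with i hxi hyi
    exact div_nonneg (Real.log_nonneg hxi.le) (Real.log_nonneg hyi.le)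
  constructor
  · intro hs
    have hFx : Tendsto (fun i => 1 - (x i)⁻¹) F (𝓝 0) := by
      have := hs.mul ((hy1.inv₀ one_ne_zero).const_sub 1)
      simp only [inv_one, sub_self, mul_zero] at this
      refine this.congr' (hy.mono fun i hi => ?_)
      rw [div_mul_cancel₀ _ (sub_ne_zero.2 (inv_lt_one_of_one_lt₀ hi).ne')]
    have hx1 : Tendsto x F (𝓝 1) := by
      have := (hFx.const_sub 1).inv₀ (by norm_num)
      simpa only [sub_sub_cancel, inv_inv, sub_zero, inv_one] using this
    have := hx1.mul hs
    rw [mul_zero] at this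
    refine tendsto_of_tendsto_of_tendsto_of_le_of_le' tendsto_const_nhds this hlog_nonneg ?_
    filter_upwards [hx, hy] with i hxi hyi
    exact log_div_log_le_mul_one_sub_inv_div hxi hyi
  · intro hr
    have := hy1.mul hr
    rw [mul_zero] at this
    refine tendsto_of_tendsto_of_tendsto_of_le_of_le' tendsto_const_nhds this hF_nonneg ?_
    filter_upwards [hx, hy] with i hxi hyi
    exact one_sub_inv_div_le_mul_log_div hxi hyi

lemma one_lt_div_pred {f : ℕ → ℝ} (hpos : ∀ n, 1 ≤ n → 0 < f n)
    (hmono : ∀ m n, 1 ≤ m → m < n → f m < f n) {n : ℕ} (hn : 2 ≤ n) : 1 < f n / f (n - 1) :=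
  (one_lt_div (hpos (n - 1) (by omega))).2 (hmono (n - 1) n (by omega) (by omega))

lemma tendsto_div_pred_of_tendsto_dd_log {f : ℕ → ℝ} (hpos : ∀ n, 1 ≤ n → 0 < f n)
    (hf : Tendsto (fun n => dd (fun j => Real.log (f j)) n) atTop (𝓝 0)) :
    Tendsto (fun n => f n / f (n - 1)) atTop (𝓝 1) := by
  refine (Real.exp_zero ▸ (Real.continuous_exp.tendsto 0).comp hf).congr'
    ((eventually_ge_atTop 2).mono fun n hn => ?_)
  rw [Function.comp_apply, dd_log hpos hn,
    Real.exp_log (div_pos (hpos n (by omega)) (hpos (n - 1) (by omega)))]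

lemma dd_dd_div_dd_mul_sub {U V : ℕ → ℝ} {n : ℕ} (hn : 2 ≤ n) (hU : dd U n ≠ 0)
    (hV : dd V n ≠ 0) :
    dd (fun k => dd U k / dd V k * V k - U k) n =
      V (n - 1) / dd U n * (dd U n / dd V n - dd U (n - 1) / dd V (n - 1)) * dd U n := by
  have h1 : V (n - 1) / dd U n * (dd U n / dd V n - dd U (n - 1) / dd V (n - 1)) * dd U n =
      V (n - 1) * (dd U n / dd V n - dd U (n - 1) / dd V (n - 1)) := by
    field_simp
  have h2 : dd U n / dd V n * (V n - V (n - 1)) = U n - U (n - 1) := by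
    rw [← dd_of_two_le V hn, ← dd_of_two_le U hn]
    field_simp
  rw [dd_of_two_le _ hn]
  linear_combination h2 - h1

lemma dd_div_dd_mul_sub_div_eq {U V : ℕ → ℝ} {n : ℕ} (hn : 2 ≤ n) (hU : U n ≠ 0) (hV : V n ≠ 0)
    (hdV : dd V n ≠ 0) :
    (dd U n / dd V n * V n - U n) / U n =
      (1 - (U n / U (n - 1))⁻¹) / (1 - (V n / V (n - 1))⁻¹) - 1 := by
  rw [dd_of_two_le V hn] at hdV
  simp only [inv_div, dd_of_two_le U hn, dd_of_two_le V hn]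
  field_simp

theorem stmt18_general (V U : ℕ → ℝ)
    (hVpos : ∀ n : ℕ, 1 ≤ n → 0 < V n)
    (hVmono : ∀ m n : ℕ, 1 ≤ m → m < n → V m < V n)
    (hUpos : ∀ n : ℕ, 1 ≤ n → 0 < U n)
    (hUmono : ∀ m n : ℕ, 1 ≤ m → m < n → U m < U n)
    (hUtop : Tendsto U atTop atTop)
    (hVlog : Tendsto (fun N : ℕ => dd (fun j => Real.log (V j)) N) atTop (nhds 0))
    (c : EReal)
    (hc : Tendsto (fun N : ℕ =>
        ((V (N - 1) / dd U N *
          (dd U N / dd V N - dd U (N - 1) / dd V (N - 1)) : ℝ) : EReal))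
      atTop (nhds c)) :
    c = -1 ↔
      Tendsto (fun N : ℕ =>
          dd (fun j => Real.log (U j)) N / dd (fun j => Real.log (V j)) N)
        atTop (nhds 0) := by
  have hdU : ∀ n, 1 ≤ n → 0 < dd U n := fun _ => dd_pos hUpos hUmono
  have hdV : ∀ n, 1 ≤ n → 0 < dd V n := fun _ => dd_pos hVpos hVmono
  have hA : ∀ᶠ n in atTop, dd (fun k => dd U k / dd V k * V k - U k) n =
      V (n - 1) / dd U n * (dd U n / dd V n - dd U (n - 1) / dd V (n - 1)) * dd U n :=
    (eventually_ge_atTop 2).mono fun n hn =>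
      dd_dd_div_dd_mul_sub hn (hdU n (by omega)).ne' (hdV n (by omega)).ne'
  have hAU : ∀ᶠ n in atTop, (dd U n / dd V n * V n - U n) / U n =
      (1 - (U n / U (n - 1))⁻¹) / (1 - (V n / V (n - 1))⁻¹) - 1 :=
    (eventually_ge_atTop 2).mono fun n hn => dd_div_dd_mul_sub_div_eq hn
      (hUpos n (by omega)).ne' (hVpos n (by omega)).ne' (hdV n (by omega)).ne'
  rw [show (-1 : EReal) = ((0 - 1 : ℝ) : EReal) by norm_num,
    eq_coe_iff_tendsto_div_of_dd_eq_mul (dd_nonneg hUpos hUmono) hUtop hA hc,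
    tendsto_congr' hAU, tendsto_sub_const_iff, tendsto_one_sub_inv_div_iff_tendsto_log_div
      ((eventually_ge_atTop 2).mono fun n => one_lt_div_pred hUpos hUmono)
      ((eventually_ge_atTop 2).mono fun n => one_lt_div_pred hVpos hVmono)
      (tendsto_div_pred_of_tendsto_dd_log hVpos hVlog)]
  refine tendsto_congr' ((eventually_ge_atTop 2).mono fun n hn => ?_)
  simp only [dd_log hUpos hn, dd_log hVpos hn]

/-- if the limit `c` of `(V(N−1)/ΔU(N))·(ΔU(N)/ΔV(N) − ΔU(N−1)/ΔV(N−1))`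
exists in `ℝ ∪ {±∞}`, then `c = −1` iff `lim_N Δ log U(N)/Δ log V(N) = 0`. -/
theorem stmt18 (V U : ℕ → ℝ)
    (hVpos : ∀ n : ℕ, 1 ≤ n → 0 < V n)
    (hVmono : ∀ m n : ℕ, 1 ≤ m → m < n → V m < V n)
    (hVtop : Tendsto V atTop atTop)
    (hUpos : ∀ n : ℕ, 1 ≤ n → 0 < U n)
    (hUmono : ∀ m n : ℕ, 1 ≤ m → m < n → U m < U n)
    (hUtop : Tendsto U atTop atTop)
    (hVlog : Tendsto (fun N : ℕ => dd (fun j => Real.log (V j)) N) atTop (nhds 0))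
    (c : EReal)
    (hc : Tendsto (fun N : ℕ =>
        ((V (N - 1) / dd U N *
          (dd U N / dd V N - dd U (N - 1) / dd V (N - 1)) : ℝ) : EReal))
      atTop (nhds c)) :
    c = -1 ↔
      Tendsto (fun N : ℕ =>
          dd (fun j => Real.log (U j)) N / dd (fun j => Real.log (V j)) N)
        atTop (nhds 0) :=
  stmt18_general V U hVpos hVmono hUpos hUmono hUtop hVlog c hc
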